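/- Let α ∈ (0,1] and p ≥ 1 real. For x > 0, T_α((J_α)_p(x)) = α·(J_α)_{p−1}(x) − (α·p/x^α)·(J_α)_p(x). -/

import Mathlib

open Real

noncomputable def confDeriv (α : ℝ) (f : ℝ → ℝ) (x : ℝ) : ℝ :=
  x ^ (1 - α) * deriv f x

noncomputable def confBesselJ (α q : ℝ) (x : ℝ) : ℝ :=
  ∑' n : ℕ, ((-1 : ℝ) ^ n / ((n.factorial : ℝ) * Real.Gamma (q + n + 1)))
    * (x ^ α / 2) ^ (2 * (n : ℝ) + q)

/-!
With `t = x ^ α`, `confBesselJ α q x` is the classical Bessel function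
`J_q(t) = ∑ (-1)ⁿ / (n! Γ(q + n + 1)) (t / 2) ^ (2n + q)`, and by the chain rule
`T_α = x ^ (1 - α) d/dx` becomes `α d/dt`. The theorem is thus `α` times the classical recurrence
`J_q' = J_{q-1} - (q / t) J_q`, which holds term by term because `Γ(q + n + 1) = (q + n) Γ(q + n)`.
Termwise differentiation is justified on each `Ioo a b` with `0 < a` by the majorant
`C ⋅ Kⁿ / n!`, using `Γ(q + 1) ≤ Γ(q + n + 1)` for `q ≥ 0`.
-/

open Set
open scoped Nat

noncomputable def besselCoeff (q : ℝ) (n : ℕ) : ℝ :=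
  (-1) ^ n / (n ! * Gamma (q + n + 1))

noncomputable def besselTerm (q : ℝ) (n : ℕ) (t : ℝ) : ℝ :=
  besselCoeff q n * (t / 2) ^ (2 * (n : ℝ) + q)

noncomputable def besselJ (q t : ℝ) : ℝ :=
  ∑' n : ℕ, besselTerm q n t

lemma confBesselJ_eq_comp (α q : ℝ) : confBesselJ α q = besselJ q ∘ (· ^ α) := rfl

lemma rpow_two_mul_natCast_add {b : ℝ} (hb : b ≠ 0) (n : ℕ) (q : ℝ) :
    b ^ (2 * (n : ℝ) + q) = b ^ q * (b ^ 2) ^ n := by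
  rw [← pow_mul, ← rpow_add_natCast hb]
  push_cast
  ring_nf

lemma Gamma_le_Gamma_add_nat {s : ℝ} (hs : 1 ≤ s) (n : ℕ) : Gamma s ≤ Gamma (s + n) := by
  induction n with
  | zero => simp
  | succ n ih =>
    have hsn : 0 < s + n := by positivity
    rw [Nat.cast_succ, ← add_assoc, Gamma_add_one hsn.ne']
    exact ih.trans <| le_mul_of_one_le_left (Gamma_pos_of_pos hsn).le <| by
      linarith [n.cast_nonneg (α := ℝ)]

lemma abs_besselCoeff_le {q : ℝ} (hq : 0 ≤ q) (n : ℕ) :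
    |besselCoeff q n| ≤ (n ! * Gamma (q + 1))⁻¹ := by
  have hΓ : 0 < Gamma (q + 1) := Gamma_pos_of_pos (by linarith)
  have hΓn : Gamma (q + 1) ≤ Gamma (q + n + 1) := by
    simpa only [add_right_comm q 1] using Gamma_le_Gamma_add_nat (by linarith : 1 ≤ q + 1) n
  rw [besselCoeff, abs_div, abs_pow, abs_neg, abs_one, one_pow, one_div,
    abs_of_pos (by positivity)]
  exact inv_anti₀ (by positivity) (by gcongr)

lemma abs_besselTerm_le {q t M : ℝ} (hq : 0 ≤ q) (ht : 0 < t) (htM : t ≤ M) (n : ℕ) :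
    |besselTerm q n t| ≤ (M / 2) ^ q / Gamma (q + 1) * (((M / 2) ^ 2) ^ n / n !) := by
  have hpow : (t / 2) ^ (2 * (n : ℝ) + q) ≤ (M / 2) ^ (2 * (n : ℝ) + q) :=
    rpow_le_rpow (by positivity) (by linarith) (by positivity)
  calc |besselTerm q n t|
      = |besselCoeff q n| * (t / 2) ^ (2 * (n : ℝ) + q) := by
        rw [besselTerm, abs_mul, abs_of_pos (rpow_pos_of_pos (half_pos ht) _)]
    _ ≤ (n ! * Gamma (q + 1))⁻¹ * (M / 2) ^ (2 * (n : ℝ) + q) :=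
        mul_le_mul (abs_besselCoeff_le hq n) hpow (by positivity) (by positivity)
    _ = (M / 2) ^ q / Gamma (q + 1) * (((M / 2) ^ 2) ^ n / n !) := by
        rw [rpow_two_mul_natCast_add (by linarith) n q]
        ring

lemma summable_besselTerm {q t : ℝ} (hq : 0 ≤ q) (ht : 0 < t) :
    Summable (besselTerm q · t) :=
  .of_norm_bounded ((Real.summable_pow_div_factorial _).mul_left _)
    (abs_besselTerm_le hq ht le_rfl)

lemma hasDerivAt_besselTerm (q : ℝ) (n : ℕ) {t : ℝ} (ht : 0 < t) :
    HasDerivAt (besselTerm q n) ((2 * n + q) / t * besselTerm q n t) t := by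
  have h := ((hasDerivAt_id t).div_const 2).rpow_const (p := 2 * (n : ℝ) + q)
    (Or.inl (by simp [ht.ne']))
  refine (h.const_mul (besselCoeff q n)).congr_deriv ?_
  rw [besselTerm, id, rpow_sub_one (by positivity)]
  field_simp

lemma exists_summable_bound_deriv_besselTerm {q a : ℝ} (hq : 0 ≤ q) (ha : 0 < a) (b : ℝ) :
    ∃ u : ℕ → ℝ, Summable u ∧
      ∀ n : ℕ, ∀ s ∈ Ioo a b, ‖(2 * n + q) / s * besselTerm q n s‖ ≤ u n := by
  refine ⟨fun n => (q + 2) / a * ((b / 2) ^ q / Gamma (q + 1)) * ((2 * (b / 2) ^ 2) ^ n / n !),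
    (Real.summable_pow_div_factorial _).mul_left _, fun n s hs => ?_⟩
  have hs0 : 0 < s := ha.trans hs.1
  have hcoeff : 2 * (n : ℝ) + q ≤ (q + 2) * 2 ^ n := by
    have h1 : (n : ℝ) < 2 ^ n := by exact_mod_cast n.lt_two_pow_self
    have h2 : (1 : ℝ) ≤ 2 ^ n := one_le_pow₀ one_le_two
    nlinarith
  calc ‖(2 * n + q) / s * besselTerm q n s‖
      = (2 * n + q) / s * |besselTerm q n s| := by
        rw [norm_mul, Real.norm_eq_abs, Real.norm_eq_abs, abs_of_nonneg (by positivity)]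
    _ ≤ (q + 2) * 2 ^ n / a * ((b / 2) ^ q / Gamma (q + 1) * (((b / 2) ^ 2) ^ n / n !)) :=
        mul_le_mul (div_le_div₀ (by positivity) hcoeff ha hs.1.le)
          (abs_besselTerm_le hq hs0 hs.2.le n) (abs_nonneg _) (by positivity)
    _ = (q + 2) / a * ((b / 2) ^ q / Gamma (q + 1)) * ((2 * (b / 2) ^ 2) ^ n / n !) := by
        rw [mul_pow]
        ring

lemma summable_deriv_besselTerm {q t : ℝ} (hq : 0 ≤ q) (ht : 0 < t) :
    Summable fun n : ℕ => (2 * n + q) / t * besselTerm q n t := by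
  obtain ⟨u, hu, hbound⟩ := exists_summable_bound_deriv_besselTerm hq (half_pos ht) (2 * t)
  exact .of_norm_bounded hu (hbound · t ⟨by linarith, by linarith⟩)

lemma hasDerivAt_besselJ_tsum {q t : ℝ} (hq : 0 ≤ q) (ht : 0 < t) :
    HasDerivAt (besselJ q) (∑' n : ℕ, (2 * n + q) / t * besselTerm q n t) t := by
  obtain ⟨u, hu, hbound⟩ := exists_summable_bound_deriv_besselTerm hq (half_pos ht) (2 * t)
  have ht_mem : t ∈ Ioo (t / 2) (2 * t) := ⟨by linarith, by linarith⟩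
  exact hasDerivAt_tsum_of_isPreconnected hu isOpen_Ioo isPreconnected_Ioo
    (fun n s hs => hasDerivAt_besselTerm q n (by linarith [hs.1])) hbound ht_mem
    (summable_besselTerm hq ht) ht_mem

lemma besselTerm_sub_one (q : ℝ) (n : ℕ) {t : ℝ} (ht : 0 < t) :
    besselTerm (q - 1) n t = 2 * (n + q) / t * besselTerm q n t := by
  rw [besselTerm, besselTerm, besselCoeff, besselCoeff,
    show 2 * (n : ℝ) + (q - 1) = 2 * n + q - 1 by ring, rpow_sub_one (by positivity),
    show q - 1 + n + 1 = q + n by ring]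
  -- At `q + n = 0` both sides vanish: `Gamma 0 = 0` plays the role of the zero of `1 / Γ`.
  rcases eq_or_ne (q + n) 0 with hqn | hqn
  · rw [hqn, Gamma_zero, show (n : ℝ) + q = 0 by linarith]
    simp
  · rw [add_assoc q, ← add_assoc, Gamma_add_one hqn]
    field_simp
    ring

theorem hasDerivAt_besselJ {q t : ℝ} (hq : 0 ≤ q) (ht : 0 < t) :
    HasDerivAt (besselJ q) (besselJ (q - 1) t - q / t * besselJ q t) t := by
  have hsum := (summable_besselTerm hq ht).mul_left (q / t)
  have hrec : ∀ n : ℕ, (2 * n + q) / t * besselTerm q n t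
      = besselTerm (q - 1) n t - q / t * besselTerm q n t := by
    intro n
    rw [besselTerm_sub_one q n ht]
    ring
  have hsum_pred : Summable (besselTerm (q - 1) · t) :=
    ((summable_deriv_besselTerm hq ht).add hsum).congr fun n => by rw [hrec]; ring
  convert hasDerivAt_besselJ_tsum hq ht using 1
  rw [tsum_congr hrec, hsum_pred.tsum_sub hsum, tsum_mul_left]
  rfl

theorem hasDerivAt_confBesselJ (α : ℝ) {q x : ℝ} (hq : 0 ≤ q) (hx : 0 < x) :
    HasDerivAt (confBesselJ α q)
      (α * x ^ (α - 1) * (confBesselJ α (q - 1) x - q / x ^ α * confBesselJ α q x)) x := by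
  rw [mul_comm, confBesselJ_eq_comp, confBesselJ_eq_comp]
  exact (hasDerivAt_besselJ hq (rpow_pos_of_pos hx α)).comp x
    (hasDerivAt_rpow_const (Or.inl hx.ne'))

theorem conformable_bessel_deriv_iii_general (α : ℝ)
    (p : ℝ) (hp : 1 ≤ p) (x : ℝ) (hx : 0 < x) :
    confDeriv α (confBesselJ α p) x
      = α * confBesselJ α (p - 1) x - (α * p / x ^ α) * confBesselJ α p x := by
  have hpow : x ^ (1 - α) * x ^ (α - 1) = 1 := by
    rw [← rpow_add hx]
    simp
  rw [confDeriv, (hasDerivAt_confBesselJ α (by linarith) hx).deriv]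
  linear_combination (α * (confBesselJ α (p - 1) x - p / x ^ α * confBesselJ α p x)) * hpow

theorem conformable_bessel_deriv_iii (α : ℝ) (hα : α ∈ Set.Ioc (0:ℝ) 1)
    (p : ℝ) (hp : 1 ≤ p) (x : ℝ) (hx : 0 < x) :
    confDeriv α (confBesselJ α p) x
      = α * confBesselJ α (p - 1) x - (α * p / x ^ α) * confBesselJ α p x :=
  conformable_bessel_deriv_iii_general α p hp x hx
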